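/- For any integer k ≥ 3 and real y ∈ (0, k), |y(1−y)(2−y)⋯(k−y)| ≤ (k!/6)·max_{0<t<1} t(1−t)(2−t)(3−t) ≤ k!/6. -/

import Mathlib

/-!
Writing `u = t (3 - t)`, the quartic `t (1 - t) (2 - t) (3 - t) = u (2 - u) = 1 - (u - 1)²` has maximum `1`
on `(0, 1)` and absolute value at most `1` on `[0, 3]`; this is the case `k = 3`. Passing from `k` to
`k + 1`, the product picks up the factor `|k + 1 - y| ≤ k + 1` when `y ≤ k`, and the remaining case
`y ∈ [k, k + 1]` is reflected to `k + 1 - y ∈ [0, 1]` by the symmetry `j ↦ k + 1 - j` of the nodes.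
-/

open Finset

lemma quartic_eq_one_sub_sq (t : ℝ) :
    t * (1 - t) * (2 - t) * (3 - t) = 1 - (t ^ 2 - 3 * t + 1) ^ 2 := by
  ring

lemma quartic_le_one (t : ℝ) : t * (1 - t) * (2 - t) * (3 - t) ≤ 1 := by
  rw [quartic_eq_one_sub_sq]
  linarith [sq_nonneg (t ^ 2 - 3 * t + 1)]

lemma abs_quartic_le_one {t : ℝ} (ht : t ∈ Set.Icc (0 : ℝ) 3) :
    |t * (1 - t) * (2 - t) * (3 - t)| ≤ 1 := by
  obtain ⟨h0, h3⟩ := ht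
  have hu : 0 ≤ t * (3 - t) ∧ t * (3 - t) ≤ 9 / 4 :=
    ⟨mul_nonneg h0 (by linarith), by nlinarith [sq_nonneg (2 * t - 3)]⟩
  have hsq : (t ^ 2 - 3 * t + 1) ^ 2 ≤ 2 := by nlinarith
  rw [abs_le, quartic_eq_one_sub_sq]
  constructor <;> nlinarith [sq_nonneg (t ^ 2 - 3 * t + 1)]

lemma sSup_quartic_image_Ioo :
    sSup ((fun t : ℝ => t * (1 - t) * (2 - t) * (3 - t)) '' Set.Ioo 0 1) = 1 := by
  refine IsGreatest.csSup_eq ⟨?_, ?_⟩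
  · -- the smaller root of `t² - 3t + 1`
    have h5 : Real.sqrt 5 ^ 2 = 5 := Real.sq_sqrt (by norm_num)
    have h2 : 2 < Real.sqrt 5 := by nlinarith [Real.sqrt_nonneg 5]
    have h3 : Real.sqrt 5 < 3 := by nlinarith [Real.sqrt_nonneg 5]
    refine ⟨(3 - Real.sqrt 5) / 2, ⟨by linarith, by linarith⟩, ?_⟩
    have hroot : ((3 - Real.sqrt 5) / 2) ^ 2 - 3 * ((3 - Real.sqrt 5) / 2) + 1 = 0 := by
      linear_combination h5 / 4
    simp only [quartic_eq_one_sub_sq, hroot]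
    norm_num
  · rintro _ ⟨t, -, rfl⟩
    exact quartic_le_one t

lemma prod_range_abs_sub_reflect (n : ℕ) (y : ℝ) :
    ∏ j ∈ range (n + 1), |(j : ℝ) - y| = ∏ j ∈ range (n + 1), |(j : ℝ) - (n - y)| := by
  rw [← prod_range_reflect]
  refine prod_congr rfl fun j hj => ?_
  rw [Nat.add_sub_cancel, Nat.cast_sub (Nat.lt_succ_iff.mp (mem_range.mp hj)), ← abs_neg]
  ring_nf

lemma prod_range_abs_sub_le_factorial_div_six {k : ℕ} (hk : 3 ≤ k) {y : ℝ}
    (hy : y ∈ Set.Icc (0 : ℝ) k) :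
    ∏ j ∈ range (k + 1), |(j : ℝ) - y| ≤ (k.factorial : ℝ) / 6 := by
  induction k, hk using Nat.le_induction generalizing y with
  | base =>
    have h4 : ∏ j ∈ range 4, |(j : ℝ) - y| = |y * (1 - y) * (2 - y) * (3 - y)| := by
      simp [prod_range_succ, abs_mul, abs_sub_comm]
    rw [h4, show ((3 : ℕ).factorial : ℝ) / 6 = 1 by norm_num [Nat.factorial]]
    exact abs_quartic_le_one (by exact_mod_cast hy)
  | succ k hk ih =>
    have hk3 : (3 : ℝ) ≤ k := by exact_mod_cast hk
    have step : ∀ z ∈ Set.Icc (0 : ℝ) k,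
        ∏ j ∈ range (k + 1 + 1), |(j : ℝ) - z| ≤ ((k + 1).factorial : ℝ) / 6 := by
      rintro z ⟨hz0, hzk⟩
      have hlast : |((k + 1 : ℕ) : ℝ) - z| ≤ k + 1 := by
        rw [abs_of_pos (by push_cast; linarith)]
        push_cast
        linarith
      calc ∏ j ∈ range (k + 1 + 1), |(j : ℝ) - z|
          = (∏ j ∈ range (k + 1), |(j : ℝ) - z|) * |((k + 1 : ℕ) : ℝ) - z| := prod_range_succ _ _
        _ ≤ (k.factorial : ℝ) / 6 * (k + 1) :=
          mul_le_mul (ih ⟨hz0, hzk⟩) hlast (abs_nonneg _) (by positivity)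
        _ = ((k + 1).factorial : ℝ) / 6 := by push_cast [Nat.factorial_succ]; ring
    obtain ⟨hy0, hyk⟩ := hy
    push_cast at hyk
    rcases le_total y k with hle | hge
    · exact step y ⟨hy0, hle⟩
    · rw [prod_range_abs_sub_reflect]
      push_cast
      exact step _ ⟨by linarith, by linarith⟩

theorem stmt_5 (k : ℕ) (hk : 3 ≤ k) (y : ℝ) (hy : y ∈ Set.Ioo (0 : ℝ) k) :
    (∏ j ∈ Finset.range (k + 1), |(j : ℝ) - y|) ≤
      ((Nat.factorial k : ℝ) / 6) * sSup ((fun t : ℝ => t * (1 - t) * (2 - t) * (3 - t)) '' Set.Ioo 0 1) ∧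
    ((Nat.factorial k : ℝ) / 6) * sSup ((fun t : ℝ => t * (1 - t) * (2 - t) * (3 - t)) '' Set.Ioo 0 1) ≤
      (Nat.factorial k : ℝ) / 6 := by
  rw [sSup_quartic_image_Ioo, mul_one]
  exact ⟨prod_range_abs_sub_le_factorial_div_six hk (Set.Ioo_subset_Icc_self hy), le_rfl⟩
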